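/- Let M=(S,P,I,AP,L) be a finite generalized possibilistic Kripke structure and B : S → [0,1] a fuzzy state. Then for every state s ∈ S, the repeated reachability possibility satisfies Po(s ⊨ □◇B) = ( P⁺ ∘ diag(P⁺(t,t))_{t∈S} ∘ B )(s), i.e. Po(s ⊨ □◇B) = sup_{t∈S} ( P⁺(s,t) ∧ P⁺(t,t) ∧ B(t) ). -/

import Mathlib

open unitInterval

instance : Fact ((0:ℝ) ≤ 1) := ⟨zero_le_one⟩

open Classical in
/-- The identity fuzzy matrix `P⁰`. -/
noncomputable def matId {S : Type*} : S → S → unitInterval :=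
  fun s t => if s = t then 1 else 0

/-- Max–min composition of fuzzy matrices: `(A∘B)(s,t) = sup_u A(s,u) ∧ B(u,t)`. -/
noncomputable def matComp {S : Type*} (A B : S → S → unitInterval) : S → S → unitInterval :=
  fun s t => ⨆ u, A s u ⊓ B u t

/-- `k`-th max–min power of a fuzzy matrix (`A⁰` is the identity matrix). -/
noncomputable def matPow {S : Type*} (A : S → S → unitInterval) : ℕ → S → S → unitInterval
  | 0 => matId
  | n + 1 => matComp (matPow A n) A

/-- Transitive closure `A⁺ = sup_{k ≥ 1} Aᵏ`. -/
noncomputable def transClos {S : Type*} (A : S → S → unitInterval) : S → S → unitInterval :=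
  fun s t => ⨆ k, matPow A (k + 1) s t

/-- Reflexive–transitive closure `A* = A⁰ ∨ A⁺ = sup_{k ≥ 0} Aᵏ`. -/
noncomputable def reflTransClos {S : Type*} (A : S → S → unitInterval) : S → S → unitInterval :=
  fun s t => ⨆ k, matPow A k s t

open Classical in
/-- The diagonal fuzzy matrix `D_B` of a fuzzy state `B`. -/
noncomputable def diagMat {S : Type*} (B : S → unitInterval) : S → S → unitInterval :=
  fun s t => if s = t then B s else 0

/-- Max–min application of a fuzzy matrix to a fuzzy vector. -/
noncomputable def matVec {S : Type*} (A : S → S → unitInterval) (v : S → unitInterval) :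
    S → unitInterval :=
  fun s => ⨆ t, A s t ⊓ v t

/-- `r_P(s) = sup { inf_{i≥0} P(s_i, s_{i+1}) : s₀ = s }`. -/
noncomputable def rP {S : Type*} (P : S → S → unitInterval) : S → unitInterval :=
  fun s => ⨆ (π : ℕ → S) (_ : π 0 = s), ⨅ i, P (π i) (π (i + 1))

/-- The possibility `Po(s ⊨ Φ)` of a fuzzy path property `Φ` at a state `s`:
`sup_{π ∈ S^ω, π₀ = s} ( inf_{i≥0} P(π_i,π_{i+1}) ∧ Φ(π) )`. -/
noncomputable def Po {S : Type*} (P : S → S → unitInterval) (Φ : (ℕ → S) → unitInterval)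
    (s : S) : unitInterval :=
  ⨆ (π : ℕ → S) (_ : π 0 = s), (⨅ i, P (π i) (π (i + 1))) ⊓ Φ π

/-- The generalized possibility measure of a set of infinite state sequences:
`Po(E) = sup_{π ∈ E} ( I(π₀) ∧ inf_{i≥0} P(π_i,π_{i+1}) )`. -/
noncomputable def PoSet {S : Type*} (P : S → S → unitInterval) (Init : S → unitInterval)
    (E : Set (ℕ → S)) : unitInterval :=
  ⨆ π ∈ E, Init (π 0) ⊓ ⨅ i, P (π i) (π (i + 1))

/-! A path's weight is at most `Pⁿ(π a, π (a + n))` for every segment, and since `S` is finite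
some state `t` with `B t ≥ limsup B(π j)` is visited infinitely often along any path; two visits
of `t` after time `0` bound the weight by `P⁺(s,t) ∧ P⁺(t,t)`. Conversely, a path of length `k`
from `s` to `t` realizing `Pᵏ(s,t)` (finiteness again: each max–min sup is attained) followed
forever by a cycle at `t` realizing `Pᵐ(t,t)` is a lasso whose weight is at least
`Pᵏ(s,t) ∧ Pᵐ(t,t)` and which visits `t` infinitely often. -/

open Filter

section

variable {S : Type*}

noncomputable def pathWeight (P : S → S → unitInterval) (π : ℕ → S) : unitInterval :=
  ⨅ i, P (π i) (π (i + 1))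

theorem matPow_one (P : S → S → unitInterval) : matPow P 1 = P := by
  funext s t
  simp only [matPow, matComp, matId]
  refine le_antisymm (iSup_le fun u => ?_) (le_iSup_of_le s (by simp [unitInterval.le_one']))
  split_ifs with h
  · simp [h]
  · simp

theorem pathWeight_le_matPow (P : S → S → unitInterval) (π : ℕ → S) (a n : ℕ) :
    pathWeight P π ≤ matPow P n (π a) (π (a + n)) := by
  induction n with
  | zero => simp [matPow, matId, unitInterval.le_one']
  | succ n ih => exact le_iSup_of_le (π (a + n)) (le_inf ih (iInf_le _ (a + n)))

theorem matPow_le_transClos (P : S → S → unitInterval) {n : ℕ} (hn : 0 < n) (s t : S) :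
    matPow P n s t ≤ transClos P s t := by
  obtain ⟨k, rfl⟩ := Nat.exists_eq_add_one.2 hn
  exact le_iSup (fun k => matPow P (k + 1) s t) k

theorem pathWeight_le_transClos (P : S → S → unitInterval) (π : ℕ → S) {a b : ℕ} (hab : a < b) :
    pathWeight P π ≤ transClos P (π a) (π b) := by
  obtain ⟨n, rfl⟩ := Nat.exists_eq_add_of_lt hab
  exact (pathWeight_le_matPow P π a (n + 1)).trans (matPow_le_transClos P n.succ_pos _ _)

theorem pathWeight_le_transClos_of_frequently (P : S → S → unitInterval) {π : ℕ → S} {t : S}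
    (h : ∃ᶠ j in atTop, π j = t) : pathWeight P π ≤ transClos P (π 0) t ⊓ transClos P t t := by
  obtain ⟨a, ha, hat⟩ := frequently_atTop.1 h 1
  obtain ⟨b, hb, hbt⟩ := frequently_atTop.1 h (a + 1)
  have hsa := pathWeight_le_transClos P π (a := 0) (b := a) ha
  have hab := pathWeight_le_transClos P π (a := a) (b := b) hb
  rw [hat] at hsa hab
  rw [hbt] at hab
  exact le_inf hsa hab

theorem exists_path_of_matPow [Finite S] (P : S → S → unitInterval) {n : ℕ} (hn : 0 < n)
    (s t : S) : ∃ f : ℕ → S, f 0 = s ∧ f n = t ∧ ∀ i < n, matPow P n s t ≤ P (f i) (f (i + 1)) := by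
  induction n, hn using Nat.le_induction generalizing t with
  | base =>
    refine ⟨fun j => if j = 0 then s else t, rfl, rfl, fun i hi => ?_⟩
    obtain rfl : i = 0 := by omega
    simp [matPow_one]
  | succ n hn ih =>
    have : Nonempty S := ⟨s⟩
    obtain ⟨u, hu⟩ := Finite.exists_max fun u => matPow P n s u ⊓ P u t
    have hmax : matPow P (n + 1) s t ≤ matPow P n s u ⊓ P u t := iSup_le hu
    obtain ⟨f, hf0, hfn, hf⟩ := ih u
    refine ⟨Function.update f (n + 1) t, by simp [hf0], by simp, fun i hi => ?_⟩
    rcases Nat.lt_succ_iff_lt_or_eq.1 hi with hi | rfl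
    · rw [Function.update_of_ne (by omega), Function.update_of_ne (by omega)]
      exact hmax.trans (inf_le_left.trans (hf i hi))
    · rw [Function.update_of_ne (by omega), Function.update_self, hfn]
      exact hmax.trans inf_le_right

def lasso (f g : ℕ → S) (k m j : ℕ) : S :=
  if j < k then f j else g ((j - k) % m)

section lasso

variable {f g : ℕ → S} {k m j : ℕ}

theorem lasso_of_le (hfg : f k = g 0) (hj : j ≤ k) : lasso f g k m j = f j := by
  unfold lasso
  split_ifs with h
  · rfl
  · obtain rfl : j = k := by omega
    simp [hfg]

theorem lasso_of_ge (hj : k ≤ j) : lasso f g k m j = g ((j - k) % m) :=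
  if_neg (by omega)

theorem le_pathWeight_lasso {P : S → S → unitInterval} {c : unitInterval} (hm : 0 < m)
    (hfg : f k = g 0) (hg : g m = g 0) (hf : ∀ i < k, c ≤ P (f i) (f (i + 1)))
    (hg' : ∀ i < m, c ≤ P (g i) (g (i + 1))) : c ≤ pathWeight P (lasso f g k m) := by
  refine le_iInf fun j => ?_
  rcases lt_or_ge j k with hj | hj
  · rw [lasso_of_le hfg hj.le, lasso_of_le hfg hj]
    exact hf j hj
  rw [lasso_of_ge hj, lasso_of_ge (by omega), show j + 1 - k = j - k + 1 by omega]
  have hr := Nat.mod_lt (j - k) hm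
  rcases (show (j - k) % m + 1 ≤ m from hr).lt_or_eq with h | h
  · rw [← Nat.mod_add_mod, Nat.mod_eq_of_lt h]
    exact hg' _ hr
  · have hlast := hg' _ hr
    rw [h, hg] at hlast
    rwa [← Nat.mod_add_mod, h, Nat.mod_self]

end lasso

theorem exists_lasso_path [Finite S] (P : S → S → unitInterval) {k m : ℕ} (hk : 0 < k)
    (hm : 0 < m) (s t : S) :
    ∃ π : ℕ → S, π 0 = s ∧ (∃ᶠ j in atTop, π j = t) ∧
      matPow P k s t ⊓ matPow P m t t ≤ pathWeight P π := by
  obtain ⟨f, hf0, hfk, hf⟩ := exists_path_of_matPow P hk s t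
  obtain ⟨g, hg0, hgm, hg⟩ := exists_path_of_matPow P hm t t
  have hfg : f k = g 0 := hfk.trans hg0.symm
  refine ⟨lasso f g k m, (lasso_of_le hfg k.zero_le).trans hf0, ?_, ?_⟩
  · refine frequently_atTop.2 fun i => ⟨k + i * m, ?_, ?_⟩
    · exact le_add_left (Nat.le_mul_of_pos_right i hm)
    · rw [lasso_of_ge (Nat.le_add_right _ _), Nat.add_sub_cancel_left, Nat.mul_mod_left, hg0]
  · exact le_pathWeight_lasso hm hfg (hgm.trans hg0.symm)
      (fun i hi => inf_le_left.trans (hf i hi)) (fun i hi => inf_le_right.trans (hg i hi))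

theorem exists_frequently_eq_limsup_le {β : Type*} [CompleteLinearOrder β] [Finite S]
    (π : ℕ → S) (B : S → β) :
    ∃ t, (∃ᶠ j in atTop, π j = t) ∧ limsup (B ∘ π) atTop ≤ B t := by
  set T := {t | ∃ᶠ j in atTop, π j = t}
  have hT : ∀ᶠ j in atTop, π j ∈ T := by
    have : ∀ᶠ j in atTop, ∀ t, t ∉ T → π j ≠ t :=
      eventually_all.2 fun t => by
        by_cases ht : t ∈ T
        · exact Eventually.of_forall fun _ h => absurd ht h
        · exact (not_frequently.1 ht).mono fun _ hj _ => hj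
    exact this.mono fun j hj => by_contra fun hjT => hj (π j) hjT rfl
  obtain ⟨j, hj⟩ := hT.exists
  obtain ⟨t, htT, htmax⟩ := T.exists_max_image B T.toFinite ⟨π j, hj⟩
  exact ⟨t, htT, limsup_le_of_le (h := hT.mono fun j hj => htmax _ hj)⟩

end

theorem Po_repeated_reach_eq_general {S : Type*} [Fintype S]
    (P : S → S → unitInterval) (B : S → unitInterval) (s : S) :
    Po P (fun π => ⨅ i : ℕ, ⨆ j : ℕ, ⨆ _ : i ≤ j, B (π j)) s =
      ⨆ t : S, transClos P s t ⊓ transClos P t t ⊓ B t := by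
  have hlimsup (π : ℕ → S) :
      ⨅ i : ℕ, ⨆ j : ℕ, ⨆ _ : i ≤ j, B (π j) = limsup (B ∘ π) atTop :=
    limsup_eq_iInf_iSup_of_nat.symm
  change ⨆ (π : ℕ → S) (_ : π 0 = s), pathWeight P π ⊓ _ = _
  simp only [hlimsup]
  apply le_antisymm
  · refine iSup₂_le fun π hπ => ?_
    obtain ⟨t, hfreq, hB⟩ := exists_frequently_eq_limsup_le π B
    have hw := pathWeight_le_transClos_of_frequently P hfreq
    rw [hπ] at hw
    exact le_iSup_of_le t (le_inf (inf_le_left.trans hw) (inf_le_right.trans hB))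
  · refine iSup_le fun t => ?_
    simp only [transClos, iSup_inf_eq, inf_iSup_eq]
    refine iSup₂_le fun m k => ?_
    obtain ⟨π, hπ0, hfreq, hw⟩ := exists_lasso_path P k.succ_pos m.succ_pos s t
    refine le_iSup₂_of_le π hπ0 (le_inf (inf_le_left.trans hw) (inf_le_right.trans ?_))
    exact le_limsup_of_frequently_le' (hfreq.mono fun j hj => hj ▸ le_rfl)

/-- For a finite GPKS and a fuzzy state `B`, the repeated
reachability possibility satisfies
`Po(s ⊨ □◇B) = ( P⁺ ∘ diag(P⁺(t,t))_{t∈S} ∘ B )(s) = sup_{t∈S} ( P⁺(s,t) ∧ P⁺(t,t) ∧ B(t) )`. -/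
theorem Po_repeated_reach_eq {S : Type*} [Fintype S] [Nonempty S]
    {AP : Type*} [Fintype AP]
    (P : S → S → unitInterval) (Init : S → unitInterval) (L : S → AP → unitInterval)
    (B : S → unitInterval) (s : S) :
    Po P (fun π => ⨅ i : ℕ, ⨆ j : ℕ, ⨆ _ : i ≤ j, B (π j)) s =
      ⨆ t : S, transClos P s t ⊓ transClos P t t ⊓ B t :=
  Po_repeated_reach_eq_general P B s
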